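/- Let n ≥ 1, let ζ₀ ∈ 𝕋∖E_T, and let P be an extremal polynomial for the Ahlfors problem on E_T at ζ₀ (deg P ≤ n, |P| ≤ 1 on E_T, P(ζ₀) = 0, and |P'(ζ₀)| maximal among all such polynomials). Assume in addition that the function t ↦ e^{−int/2}·P(e^{it}) is real-valued for all t ∈ ℝ. If t₁ < t₂ are real numbers with t₂ − t₁ ≤ 2π such that P(e^{it₁}) = P(e^{it₂}) = 0 and P(e^{it}) ≠ 0 for all t ∈ (t₁,t₂), then there exists y ∈ (t₁,t₂) with e^{iy} ∈ E_T and |P(e^{iy})| = 1. -/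

import Mathlib

open Complex Polynomial

/-- The set `E_T = 𝕋 ∖ ⋃_j {e^{it} : a_j < t < b_j}`, a finite union of closed arcs. -/
def ETset (g : ℕ) (a b : Fin g → ℝ) : Set ℂ :=
  {ζ : ℂ | ‖ζ‖ = 1} \
    ⋃ j, (fun t : ℝ => Complex.exp (t * Complex.I)) '' Set.Ioo (a j) (b j)

/-!
Suppose `|P| < 1` at every point of `E_T` on the closed arc from `α = e^{it₁}` to `β = e^{it₂}`.
Write `P = (z - α)(z - β) P₂`, `ζ₀ = e^{iτ}` and `m = (t₁ + t₂)/2`. On the circle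
`(e^{it} - α)(e^{it} - β) = -4 sin((t - t₁)/2) sin((t - t₂)/2) e^{i(t + m)}`, while the correction
`-ε e^{i(m - τ)} (z - ζ₀)² P₂` takes the value `4ε sin²((t - τ)/2) e^{i(t + m)} P₂(e^{it})`.
Off the arc both sines are nonnegative, so adding the correction to `P` shrinks `|P|`, strictly
except at `ζ₀` where `P` vanishes; on the arc it moves `P` by at most `4ε max |P₂|`, harmless for
small `ε` because `|P|` stays below some `M < 1` there by compactness. The perturbed polynomial
still has degree at most `n`, vanishes at `ζ₀` with derivative `P'(ζ₀)`, and is `< 1` on the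
compact set `E_T`, so a multiple of it by some `λ > 1` beats `P` in the Ahlfors problem.
-/

open Metric Set

lemma exp_mul_I_sub_exp_mul_I (t s : ℝ) :
    exp (t * I) - exp (s * I) = 2 * I * Real.sin ((t - s) / 2) * exp ((t + s) / 2 * I) := by
  have ht : (t : ℂ) * I = (t - s) / 2 * I + (t + s) / 2 * I := by ring
  have hs : (s : ℂ) * I = -((t - s) / 2) * I + (t + s) / 2 * I := by ring
  rw [ht, hs, exp_add, exp_add, ofReal_sin, Complex.sin]
  push_cast
  linear_combination
    (exp ((t - s) / 2 * I) - exp (-((t - s) / 2) * I)) * exp ((t + s) / 2 * I) * I_mul_I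

lemma exp_mul_I_ne_exp_mul_I {t₁ t₂ : ℝ} (hlt : t₁ < t₂) (hper : t₂ < t₁ + 2 * Real.pi) :
    exp (t₁ * I) ≠ exp (t₂ * I) := by
  have hsin : 0 < Real.sin ((t₂ - t₁) / 2) :=
    Real.sin_pos_of_pos_of_lt_pi (by linarith) (by linarith)
  rw [ne_comm, ← sub_ne_zero, exp_mul_I_sub_exp_mul_I]
  exact mul_ne_zero (mul_ne_zero (by simp [I_ne_zero]) (ofReal_ne_zero.2 hsin.ne')) (exp_ne_zero _)

lemma eval_X_sub_C_mul_X_sub_C_exp_mul_I (t s u : ℝ) :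
    ((X - C (exp (s * I))) * (X - C (exp (u * I)))).eval (exp (t * I)) =
      (-4 * Real.sin ((t - s) / 2) * Real.sin ((t - u) / 2) : ℝ) *
        exp ((t + (s + u) / 2) * I) := by
  have hexp : exp ((t + s) / 2 * I) * exp ((t + u) / 2 * I) = exp ((t + (s + u) / 2) * I) := by
    rw [← exp_add]
    ring_nf
  simp only [eval_mul, eval_sub, eval_X, eval_C, exp_mul_I_sub_exp_mul_I, ofReal_mul, ofReal_neg,
    ofReal_ofNat]
  linear_combination 4 * I * I * Real.sin ((t - s) / 2) * Real.sin ((t - u) / 2) * hexp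
    + 4 * Real.sin ((t - s) / 2) * Real.sin ((t - u) / 2) * exp ((t + (s + u) / 2) * I) * I_mul_I

lemma exists_mem_Ico_exp_mul_I_eq (c : ℝ) {ζ : ℂ} (hζ : ‖ζ‖ = 1) :
    ∃ t ∈ Ico c (c + 2 * Real.pi), exp (t * I) = ζ := by
  have hper : Function.Periodic (fun t : ℝ => exp (t * I)) (2 * Real.pi) := fun t => by
    simpa using exp_mul_I_periodic t
  obtain ⟨t, ht, he⟩ := hper.exists_mem_Ico Real.two_pi_pos (arg ζ) c
  refine ⟨t, ht, ?_⟩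
  rw [← he]
  simpa [hζ] using norm_mul_exp_arg_mul_I ζ

-- The image of `(a, b)` is the trace on the circle of the open set `exp '' {a < im < b}`.
lemma isCompact_ETset (g : ℕ) (a b : Fin g → ℝ) : IsCompact (ETset g a b) := by
  have himage (a b : ℝ) : (fun t : ℝ => exp (t * I)) '' Ioo a b =
      sphere 0 1 ∩ exp '' (im ⁻¹' Ioo a b) := by
    ext ζ
    constructor
    · rintro ⟨t, ht, rfl⟩
      exact ⟨by simp, t * I, by simpa using ht, rfl⟩
    · rintro ⟨hζ, z, hz, rfl⟩
      have hre : z.re = 0 := by simpa [norm_exp] using hζ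
      refine ⟨z.im, hz, ?_⟩
      conv_rhs => rw [← re_add_im z, hre]
      simp
  have hE : ETset g a b = sphere 0 1 ∩ (⋃ j, exp '' (im ⁻¹' Ioo (a j) (b j)))ᶜ := by
    have hT : {ζ : ℂ | ‖ζ‖ = 1} = sphere 0 1 := by ext; simp
    rw [ETset, hT]
    simp only [himage]
    rw [← inter_iUnion, sdiff_self_inter, sdiff_eq]
  rw [hE]
  exact (isCompact_sphere 0 1).inter_right (isOpen_iUnion fun j =>
    isOpenMap_exp _ (isOpen_Ioo.preimage continuous_im)).isClosed_compl

lemma ETset_subset_sphere (g : ℕ) (a b : Fin g → ℝ) : ETset g a b ⊆ sphere 0 1 :=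
  fun _ hζ => mem_sphere_zero_iff_norm.2 hζ.1

lemma IsCompact.exists_lt_forall_le_of_forall_lt {X : Type*} [TopologicalSpace X] {K : Set X}
    (hK : IsCompact K) {f : X → ℝ} (hf : ContinuousOn f K) {c : ℝ} (h : ∀ x ∈ K, f x < c) :
    ∃ M < c, ∀ x ∈ K, f x ≤ M := by
  rcases K.eq_empty_or_nonempty with rfl | hne
  · exact ⟨c - 1, by linarith, by simp⟩
  · obtain ⟨x₀, hx₀, hmax⟩ := hK.exists_isMaxOn hne hf
    exact ⟨f x₀, h x₀ hx₀, hmax⟩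

lemma mul_abs_sub_lt_one {x A B : ℝ} (hx : 0 ≤ x) (hA : 0 ≤ A) (hB : 0 ≤ B) (hxA : x * A ≤ 1)
    (hxB : x * B < 1) (hB0 : B = 0 → x * A < 1) : x * |A - B| < 1 := by
  rcases le_total A B with hAB | hAB
  · rw [abs_of_nonpos (sub_nonpos.2 hAB)]
    nlinarith [mul_nonneg hx hA]
  · rw [abs_of_nonneg (sub_nonneg.2 hAB)]
    rcases hB.eq_or_lt with rfl | hB
    · simpa using hB0 rfl
    · nlinarith [mul_nonneg hx hB.le]

/-- The extremality of `P` in the Ahlfors problem on `K` at `ζ₀` is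
`AhlforsBound K n ζ₀ ‖P'(ζ₀)‖`. -/
def AhlforsBound (K : Set ℂ) (n : ℕ) (ζ₀ : ℂ) (c : ℝ) : Prop :=
  ∀ Q : ℂ[X], Q.natDegree ≤ n → (∀ ζ ∈ K, ‖Q.eval ζ‖ ≤ 1) → Q.eval ζ₀ = 0 →
    ‖(derivative Q).eval ζ₀‖ ≤ c

namespace AhlforsBound

variable {K : Set ℂ} {n : ℕ} {ζ₀ : ℂ} {c : ℝ}

lemma pos (h : AhlforsBound K n ζ₀ c) (hK : Bornology.IsBounded K) (hn : 1 ≤ n) : 0 < c := by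
  obtain ⟨r, hr, hKr⟩ := hK.subset_closedBall_lt 0 ζ₀
  have hbound := h (C (r : ℂ)⁻¹ * (X - C ζ₀))
    ((natDegree_C_mul_le _ _).trans ((natDegree_X_sub_C ζ₀).trans_le hn))
    (fun ζ hζ => by
      rw [eval_mul, eval_C, eval_sub, eval_X, eval_C, norm_mul, norm_inv, norm_real,
        Real.norm_of_nonneg hr.le, inv_mul_le_one₀ hr, ← dist_eq_norm]
      exact hKr hζ)
    (by simp)
  rw [derivative_C_mul, derivative_X_sub_C, mul_one, eval_C, norm_inv, norm_real,
    Real.norm_of_nonneg hr.le] at hbound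
  exact (inv_pos.2 hr).trans_le hbound

lemma norm_derivative_eval_lt (h : AhlforsBound K n ζ₀ c) (hK : IsCompact K) {Q : ℂ[X]}
    (hdeg : Q.natDegree ≤ n) (hQ : Q.eval ζ₀ = 0) (hlt : ∀ ζ ∈ K, ‖Q.eval ζ‖ < 1)
    (hQ' : (derivative Q).eval ζ₀ ≠ 0) : ‖(derivative Q).eval ζ₀‖ < c := by
  obtain ⟨M, hM1, hM⟩ := hK.exists_lt_forall_le_of_forall_lt
    (Q.continuous.norm.continuousOn (s := K)) hlt
  set M' := max M 2⁻¹
  have hM'0 : 0 < M' := lt_max_of_lt_right (by norm_num)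
  have hM'1 : M' < 1 := max_lt hM1 (by norm_num)
  have hnorm : ‖(M' : ℂ)⁻¹‖ = M'⁻¹ := by rw [norm_inv, norm_real, Real.norm_of_nonneg hM'0.le]
  have hbound := h (C (M' : ℂ)⁻¹ * Q) ((natDegree_C_mul_le _ _).trans hdeg)
    (fun ζ hζ => by
      rw [eval_mul, eval_C, norm_mul, hnorm, inv_mul_le_one₀ hM'0]
      exact (hM ζ hζ).trans (le_max_left _ _))
    (by simp [hQ])
  rw [derivative_C_mul, eval_mul, eval_C, norm_mul, hnorm] at hbound
  calc ‖(derivative Q).eval ζ₀‖ < M'⁻¹ * ‖(derivative Q).eval ζ₀‖ :=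
        lt_mul_left (norm_pos_iff.2 hQ') (one_lt_inv₀ hM'0 |>.2 hM'1)
    _ ≤ c := hbound

end AhlforsBound

noncomputable def arcCorrection (P₂ : ℂ[X]) (t₁ t₂ τ ε : ℝ) : ℂ[X] :=
  C (-ε * exp (((t₁ + t₂) / 2 - τ) * I)) * ((X - C (exp (τ * I))) ^ 2 * P₂)

section arcCorrection

variable (P₂ : ℂ[X]) (t₁ t₂ τ ε : ℝ)

lemma natDegree_arcCorrection_le :
    (arcCorrection P₂ t₁ t₂ τ ε).natDegree ≤
      ((X - C (exp (t₁ * I))) * (X - C (exp (t₂ * I))) * P₂).natDegree := by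
  refine (natDegree_C_mul_le _ _).trans ?_
  rcases eq_or_ne P₂ 0 with rfl | h0
  · simp
  rw [natDegree_mul (pow_ne_zero _ (X_sub_C_ne_zero _)) h0,
    natDegree_mul (mul_ne_zero (X_sub_C_ne_zero _) (X_sub_C_ne_zero _)) h0,
    natDegree_mul (X_sub_C_ne_zero _) (X_sub_C_ne_zero _), natDegree_pow]
  simp only [natDegree_X_sub_C]
  omega

@[simp]
lemma eval_arcCorrection_self : (arcCorrection P₂ t₁ t₂ τ ε).eval (exp (τ * I)) = 0 := by
  simp [arcCorrection]

@[simp]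
lemma eval_derivative_arcCorrection_self :
    (derivative (arcCorrection P₂ t₁ t₂ τ ε)).eval (exp (τ * I)) = 0 := by
  simp [arcCorrection, derivative_mul, derivative_X_sub_C_sq]

lemma norm_eval_add_arcCorrection (t : ℝ) :
    ‖((X - C (exp (t₁ * I))) * (X - C (exp (t₂ * I))) * P₂ +
        arcCorrection P₂ t₁ t₂ τ ε).eval (exp (t * I))‖ =
      4 * ‖P₂.eval (exp (t * I))‖ *
        |Real.sin ((t - t₁) / 2) * Real.sin ((t - t₂) / 2) - ε * Real.sin ((t - τ) / 2) ^ 2| := by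
  have hexp : exp (((t₁ + t₂) / 2 - τ) * I) * exp ((t + (τ + τ) / 2) * I) =
      exp ((t + (t₁ + t₂) / 2) * I) := by
    rw [← exp_add]
    ring_nf
  have heval : ((X - C (exp (t₁ * I))) * (X - C (exp (t₂ * I))) * P₂ +
        arcCorrection P₂ t₁ t₂ τ ε).eval (exp (t * I)) =
      (-4 * (Real.sin ((t - t₁) / 2) * Real.sin ((t - t₂) / 2) -
        ε * Real.sin ((t - τ) / 2) ^ 2) : ℝ) * exp ((t + (t₁ + t₂) / 2) * I) *
        P₂.eval (exp (t * I)) := by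
    rw [arcCorrection, eval_add, eval_mul, eval_X_sub_C_mul_X_sub_C_exp_mul_I, eval_mul, eval_C,
      eval_mul, sq, eval_X_sub_C_mul_X_sub_C_exp_mul_I, ← hexp]
    push_cast
    ring
  have hw : ‖exp ((t + (t₁ + t₂) / 2) * I)‖ = 1 := by
    exact_mod_cast norm_exp_ofReal_mul_I (t + (t₁ + t₂) / 2)
  rw [heval, norm_mul, norm_mul, hw, norm_real, Real.norm_eq_abs, abs_mul, abs_neg,
    abs_of_nonneg (by norm_num : (0 : ℝ) ≤ 4)]
  ring

lemma norm_eval_X_sub_C_mul_X_sub_C_mul (t : ℝ) :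
    ‖((X - C (exp (t₁ * I))) * (X - C (exp (t₂ * I))) * P₂).eval (exp (t * I))‖ =
      4 * ‖P₂.eval (exp (t * I))‖ * |Real.sin ((t - t₁) / 2) * Real.sin ((t - t₂) / 2)| := by
  simpa [arcCorrection] using norm_eval_add_arcCorrection P₂ t₁ t₂ 0 0 t

lemma norm_eval_add_arcCorrection_le {ε : ℝ} (hε : 0 ≤ ε) (t : ℝ) :
    ‖((X - C (exp (t₁ * I))) * (X - C (exp (t₂ * I))) * P₂ +
        arcCorrection P₂ t₁ t₂ τ ε).eval (exp (t * I))‖ ≤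
      ‖((X - C (exp (t₁ * I))) * (X - C (exp (t₂ * I))) * P₂).eval (exp (t * I))‖ +
        4 * ‖P₂.eval (exp (t * I))‖ * ε := by
  rw [norm_eval_add_arcCorrection, norm_eval_X_sub_C_mul_X_sub_C_mul P₂ t₁ t₂ t]
  have hs : 0 ≤ ε * Real.sin ((t - τ) / 2) ^ 2 := by positivity
  have hsε : ε * Real.sin ((t - τ) / 2) ^ 2 ≤ ε :=
    mul_le_of_le_one_right hε (Real.sin_sq_le_one _)
  have habs := abs_sub (Real.sin ((t - t₁) / 2) * Real.sin ((t - t₂) / 2))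
    (ε * Real.sin ((t - τ) / 2) ^ 2)
  rw [abs_of_nonneg hs] at habs
  have hx : 0 ≤ 4 * ‖P₂.eval (exp (t * I))‖ := by positivity
  nlinarith

lemma norm_eval_add_arcCorrection_lt_one {ε : ℝ} (hε : 0 < ε) {t : ℝ} (hlt : t₁ ≤ t₂)
    (ht : t ∈ Icc t₂ (t₁ + 2 * Real.pi))
    (hzero : ((X - C (exp (t₁ * I))) * (X - C (exp (t₂ * I))) * P₂).eval (exp (τ * I)) = 0)
    (hP : ‖((X - C (exp (t₁ * I))) * (X - C (exp (t₂ * I))) * P₂).eval (exp (t * I))‖ ≤ 1)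
    (hP₂ : 4 * ‖P₂.eval (exp (t * I))‖ * ε < 1) :
    ‖((X - C (exp (t₁ * I))) * (X - C (exp (t₂ * I))) * P₂ +
        arcCorrection P₂ t₁ t₂ τ ε).eval (exp (t * I))‖ < 1 := by
  have hA : 0 ≤ Real.sin ((t - t₁) / 2) * Real.sin ((t - t₂) / 2) := mul_nonneg
    (Real.sin_nonneg_of_nonneg_of_le_pi (by linarith [ht.1]) (by linarith [ht.2]))
    (Real.sin_nonneg_of_nonneg_of_le_pi (by linarith [ht.1]) (by linarith [ht.2]))
  rw [norm_eval_X_sub_C_mul_X_sub_C_mul P₂ t₁ t₂ t, abs_of_nonneg hA] at hP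
  rw [norm_eval_add_arcCorrection]
  refine mul_abs_sub_lt_one (by positivity) hA (by positivity) hP
    (lt_of_le_of_lt (mul_le_mul_of_nonneg_left
      (mul_le_of_le_one_right hε.le (Real.sin_sq_le_one _)) (by positivity)) hP₂) fun h0 => ?_
  have hsin : Real.sin ((t - τ) / 2) = 0 := by simpa [hε.ne'] using h0
  have hτ : exp (t * I) = exp (τ * I) := by
    rw [← sub_eq_zero, exp_mul_I_sub_exp_mul_I, hsin]
    simp
  rw [← abs_of_nonneg hA, ← norm_eval_X_sub_C_mul_X_sub_C_mul, hτ, hzero, norm_zero]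
  exact one_pos

end arcCorrection

theorem exists_perturbation_of_norm_lt_one_on_arc {K : Set ℂ} (hK : IsCompact K)
    (hKT : K ⊆ sphere 0 1) {n : ℕ} {ζ₀ : ℂ} (hζ₀ : ‖ζ₀‖ = 1) {P : ℂ[X]}
    (hdeg : P.natDegree ≤ n) (hbd : ∀ ζ ∈ K, ‖P.eval ζ‖ ≤ 1) (hzero : P.eval ζ₀ = 0)
    {t₁ t₂ : ℝ} (hlt : t₁ < t₂) (hper : t₂ < t₁ + 2 * Real.pi)
    (h₁ : P.eval (exp (t₁ * I)) = 0) (h₂ : P.eval (exp (t₂ * I)) = 0)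
    (harc : ∀ t ∈ Icc t₁ t₂, exp (t * I) ∈ K → ‖P.eval (exp (t * I))‖ < 1) :
    ∃ Q : ℂ[X], Q.natDegree ≤ n ∧ Q.eval ζ₀ = 0 ∧
      (derivative Q).eval ζ₀ = (derivative P).eval ζ₀ ∧ ∀ ζ ∈ K, ‖Q.eval ζ‖ < 1 := by
  obtain ⟨τ, -, rfl⟩ := exists_mem_Ico_exp_mul_I_eq 0 hζ₀
  obtain ⟨P₂, rfl⟩ : (X - C (exp (t₁ * I))) * (X - C (exp (t₂ * I))) ∣ P :=
    (isCoprime_X_sub_C_of_isUnit_sub (sub_ne_zero.2 (exp_mul_I_ne_exp_mul_I hlt hper)).isUnit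
      ).mul_dvd (dvd_iff_isRoot.2 h₁) (dvd_iff_isRoot.2 h₂)
  obtain ⟨M, hM1, hM⟩ := (isCompact_Icc.inter_right (hK.isClosed.preimage (by fun_prop))
    ).exists_lt_forall_le_of_forall_lt (by fun_prop) (fun t ht => harc t ht.1 ht.2)
  obtain ⟨D, hD⟩ := (isCompact_sphere (0 : ℂ) 1).exists_bound_of_continuousOn
    P₂.continuous.continuousOn
  obtain ⟨ε, hε, hεD⟩ := exists_pos_mul_lt (lt_min (sub_pos.2 hM1) one_pos) (4 * D)
  have hsmall (t : ℝ) : 4 * ‖P₂.eval (exp (t * I))‖ * ε < min (1 - M) 1 :=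
    lt_of_le_of_lt (by gcongr; exact hD _ (by simp)) hεD
  refine ⟨_ + arcCorrection P₂ t₁ t₂ τ ε,
    natDegree_add_le_of_degree_le hdeg ((natDegree_arcCorrection_le ..).trans hdeg),
    by simp [hzero], by simp, fun ζ hζ => ?_⟩
  obtain ⟨t, ht, rfl⟩ := exists_mem_Ico_exp_mul_I_eq t₁ (mem_sphere_zero_iff_norm.1 (hKT hζ))
  rcases le_or_gt t t₂ with ht₂ | ht₂
  · calc _ ≤ _ := norm_eval_add_arcCorrection_le P₂ t₁ t₂ τ hε.le t
      _ < 1 := by linarith [hM t ⟨⟨ht.1, ht₂⟩, hζ⟩, hsmall t, min_le_left (1 - M) 1]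
  · exact norm_eval_add_arcCorrection_lt_one P₂ t₁ t₂ τ hε hlt.le ⟨ht₂.le, ht.2.le⟩ hzero
      (hbd _ hζ) ((hsmall t).trans_le (min_le_right _ _))

theorem exists_mem_Ioo_norm_eval_exp_mul_I_eq_one {K : Set ℂ} (hK : IsCompact K)
    (hKT : K ⊆ sphere 0 1) {n : ℕ} (hn : 1 ≤ n) {ζ₀ : ℂ} (hζ₀ : ‖ζ₀‖ = 1) {P : ℂ[X]}
    (hdeg : P.natDegree ≤ n) (hbd : ∀ ζ ∈ K, ‖P.eval ζ‖ ≤ 1) (hzero : P.eval ζ₀ = 0)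
    (hext : AhlforsBound K n ζ₀ ‖(derivative P).eval ζ₀‖) {t₁ t₂ : ℝ} (hlt : t₁ < t₂)
    (hper : t₂ - t₁ ≤ 2 * Real.pi) (h₁ : P.eval (exp (t₁ * I)) = 0)
    (h₂ : P.eval (exp (t₂ * I)) = 0) :
    ∃ y ∈ Ioo t₁ t₂, exp (y * I) ∈ K ∧ ‖P.eval (exp (y * I))‖ = 1 := by
  by_contra! hcon
  have harc : ∀ t ∈ Icc t₁ t₂, exp (t * I) ∈ K → ‖P.eval (exp (t * I))‖ < 1 := by
    rintro t ⟨ht₁, ht₂⟩ htK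
    rcases ht₁.eq_or_lt with rfl | ht₁
    · simp [h₁]
    rcases ht₂.eq_or_lt with rfl | ht₂
    · simp [h₂]
    exact (hbd _ htK).lt_of_ne (hcon t ⟨ht₁, ht₂⟩ htK)
  obtain ⟨Q, hQdeg, hQ0, hQ', hQlt⟩ : ∃ Q : ℂ[X], Q.natDegree ≤ n ∧ Q.eval ζ₀ = 0 ∧
      (derivative Q).eval ζ₀ = (derivative P).eval ζ₀ ∧ ∀ ζ ∈ K, ‖Q.eval ζ‖ < 1 := by
    rcases hper.lt_or_eq with hper | hper
    · exact exists_perturbation_of_norm_lt_one_on_arc hK hKT hζ₀ hdeg hbd hzero hlt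
        (by linarith) h₁ h₂ harc
    · refine ⟨P, hdeg, hzero, rfl, fun ζ hζ => ?_⟩
      obtain ⟨t, ht, rfl⟩ := exists_mem_Ico_exp_mul_I_eq t₁ (mem_sphere_zero_iff_norm.1 (hKT hζ))
      exact harc t ⟨ht.1, by linarith [ht.2]⟩ hζ
  have hP' : (derivative P).eval ζ₀ ≠ 0 := norm_pos_iff.1 (hext.pos hK.isBounded hn)
  exact (hext.norm_derivative_eval_lt hK hQdeg hQ0 hQlt (hQ' ▸ hP')).ne (by rw [hQ'])

theorem stmt9_general (g : ℕ) (a b : Fin g → ℝ)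
    (n : ℕ) (hn : 1 ≤ n)
    (ζ₀ : ℂ) (hζ₀T : ‖ζ₀‖ = 1)
    (P : Polynomial ℂ) (hdeg : P.natDegree ≤ n)
    (hbd : ∀ ζ ∈ ETset g a b, ‖P.eval ζ‖ ≤ 1)
    (hzero : P.eval ζ₀ = 0)
    (hext : ∀ Q : Polynomial ℂ, Q.natDegree ≤ n →
      (∀ ζ ∈ ETset g a b, ‖Q.eval ζ‖ ≤ 1) → Q.eval ζ₀ = 0 →
      ‖(Polynomial.derivative Q).eval ζ₀‖ ≤
        ‖(Polynomial.derivative P).eval ζ₀‖)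
    (t₁ t₂ : ℝ) (hlt : t₁ < t₂) (hper : t₂ - t₁ ≤ 2 * Real.pi)
    (h₁ : P.eval (Complex.exp (t₁ * Complex.I)) = 0)
    (h₂ : P.eval (Complex.exp (t₂ * Complex.I)) = 0) :
    ∃ y ∈ Set.Ioo t₁ t₂, Complex.exp (y * Complex.I) ∈ ETset g a b ∧
      ‖P.eval (Complex.exp (y * Complex.I))‖ = 1 :=
  exists_mem_Ioo_norm_eval_exp_mul_I_eq_one (isCompact_ETset g a b) (ETset_subset_sphere g a b)
    hn hζ₀T hdeg hbd hzero hext hlt hper h₁ h₂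

/-- For an extremal polynomial `P` of the Ahlfors problem on `E_T` such that
`t ↦ e^{−int/2}·P(e^{it})` is real-valued, between any two consecutive zeros of
`t ↦ P(e^{it})` there is `y` with `e^{iy} ∈ E_T` and `|P(e^{iy})| = 1`. -/
theorem stmt9 (g : ℕ) (hg : 1 ≤ g) (a b : Fin g → ℝ)
    (hpos : ∀ j, 0 < a j) (hab : ∀ j, a j < b j)
    (hord : ∀ j k : Fin g, j < k → b j < a k) (hlast : ∀ j, b j < 2 * Real.pi)
    (n : ℕ) (hn : 1 ≤ n)
    (ζ₀ : ℂ) (hζ₀T : ‖ζ₀‖ = 1) (hζ₀ : ζ₀ ∉ ETset g a b)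
    (P : Polynomial ℂ) (hdeg : P.natDegree ≤ n)
    (hbd : ∀ ζ ∈ ETset g a b, ‖P.eval ζ‖ ≤ 1)
    (hzero : P.eval ζ₀ = 0)
    (hext : ∀ Q : Polynomial ℂ, Q.natDegree ≤ n →
      (∀ ζ ∈ ETset g a b, ‖Q.eval ζ‖ ≤ 1) → Q.eval ζ₀ = 0 →
      ‖(Polynomial.derivative Q).eval ζ₀‖ ≤
        ‖(Polynomial.derivative P).eval ζ₀‖)
    (hreal : ∀ t : ℝ,
      (Complex.exp (-((n : ℂ) * t * Complex.I) / 2) *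
        P.eval (Complex.exp (t * Complex.I))).im = 0)
    (t₁ t₂ : ℝ) (hlt : t₁ < t₂) (hper : t₂ - t₁ ≤ 2 * Real.pi)
    (h₁ : P.eval (Complex.exp (t₁ * Complex.I)) = 0)
    (h₂ : P.eval (Complex.exp (t₂ * Complex.I)) = 0)
    (hne : ∀ t ∈ Set.Ioo t₁ t₂, P.eval (Complex.exp (t * Complex.I)) ≠ 0) :
    ∃ y ∈ Set.Ioo t₁ t₂, Complex.exp (y * Complex.I) ∈ ETset g a b ∧
      ‖P.eval (Complex.exp (y * Complex.I))‖ = 1 :=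
  stmt9_general g a b n hn ζ₀ hζ₀T P hdeg hbd hzero hext t₁ t₂ hlt hper h₁ h₂
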